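/- arXiv:1503.00782 — 5 statements merged into one kernel-verified Lean document; each statement's English description precedes it below -/
import Mathlib

section
/- Let a, b, c be natural numbers with c ≠ a ⊕ b (where ⊕ denotes the Nim sum). Then the number of large vertices of the triple (a,b,c) is exactly 1 or exactly 3; that is, the number of true statements among a > b ⊕ c, b > a ⊕ c, and c > a ⊕ b equals 1 or 3. -/
/-!
With `v = a ⊕ b ⊕ c ≠ 0` we have `b ⊕ c = a ⊕ v`, so `a` is large iff flipping the bits of `v`
lowers `a`, i.e. iff `a` has a one at the most significant bit `i` of `v`; likewise for `b`, `c`.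
Bit `i` of `v` is the parity of bit `i` of `a`, `b`, `c`, so an odd number of them have it set.
-/

namespace Nat

lemma xor_lt_self_iff_testBit {x v i : ℕ} (hi : v.testBit i = true)
    (hhigh : ∀ j, i < j → v.testBit j = false) : x ^^^ v < x ↔ x.testBit i = true := by
  have hagree : ∀ j, i < j → (x ^^^ v).testBit j = x.testBit j := fun j hj => by
    simp [testBit_xor, hhigh j hj]
  constructor
  · intro hlt
    by_contra hx
    rw [Bool.not_eq_true] at hx
    exact hlt.asymm <| lt_of_testBit i hx (by simp [testBit_xor, hx, hi])
      fun j hj => (hagree j hj).symm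
  · intro hx
    exact lt_of_testBit i (by simp [testBit_xor, hx, hi]) hx hagree

end Nat

lemma Bool.count_eq_one_or_three_of_xor (p q r : Bool) (h : (p ^^ q ^^ r) = true) :
    ((if p then 1 else 0) + (if q then 1 else 0) + (if r then 1 else 0) : ℕ) = 1 ∨
    ((if p then 1 else 0) + (if q then 1 else 0) + (if r then 1 else 0) : ℕ) = 3 := by
  revert h; cases p <;> cases q <;> cases r <;> decide

/-- If `c ≠ a ⊕ b`, then the number of large vertices of the triple `(a,b,c)`
(i.e. the number of true statements among `a > b ⊕ c`, `b > a ⊕ c`, `c > a ⊕ b`)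
is exactly 1 or exactly 3. -/
theorem nim_large_count_one_or_three (a b c : ℕ) (h : c ≠ a ^^^ b) :
    ((if a > b ^^^ c then 1 else 0) + (if b > a ^^^ c then 1 else 0) +
      (if c > a ^^^ b then 1 else 0) : ℕ) = 1 ∨
    ((if a > b ^^^ c then 1 else 0) + (if b > a ^^^ c then 1 else 0) +
      (if c > a ^^^ b then 1 else 0) : ℕ) = 3 := by
  set v := a ^^^ b ^^^ c with hv_def
  have hv : v ≠ 0 := Nat.xor_ne_zero_iff.2 (Ne.symm h)
  obtain ⟨i, hi, hhigh⟩ := Nat.exists_most_significant_bit hv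
  have hbc : b ^^^ c = a ^^^ v := by rw [hv_def, Nat.xor_assoc, Nat.xor_xor_cancel_left]
  have hac : a ^^^ c = b ^^^ v := by
    rw [hv_def, Nat.xor_comm a b, Nat.xor_assoc, Nat.xor_xor_cancel_left]
  have hab : a ^^^ b = c ^^^ v := by rw [hv_def, Nat.xor_comm c, Nat.xor_xor_cancel_right]
  simp only [gt_iff_lt, hbc, hac, hab, Nat.xor_lt_self_iff_testBit hi hhigh]
  apply Bool.count_eq_one_or_three_of_xor
  simpa only [hv_def, Nat.testBit_xor, Bool.bne_eq_xor] using hi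
end

section
/- Let a, b, c be natural numbers such that it is not the case that a = b ⊕ c, b = a ⊕ c, and c = a ⊕ b all hold (where ⊕ denotes the Nim sum). Then at least one of the three numbers is strictly larger than the Nim sum of the remaining two: a > b ⊕ c, or b > a ⊕ c, or c > a ⊕ b. -/
/-- If not all of `a = b ⊕ c`, `b = a ⊕ c`, `c = a ⊕ b` hold, then at least one of the
three numbers exceeds the Nim sum of the other two. -/
theorem nim_exists_large (a b c : ℕ)
    (h : ¬ (a = b ^^^ c ∧ b = a ^^^ c ∧ c = a ^^^ b)) :
    a > b ^^^ c ∨ b > a ^^^ c ∨ c > a ^^^ b := by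
  have hd : a ^^^ (b ^^^ c) ≠ 0 := by
    intro h0
    have ha : a = b ^^^ c := by
      have := congrArg (· ^^^ (b ^^^ c)) h0
      simpa [Nat.xor_assoc] using this
    apply h
    refine ⟨ha, ?_, ?_⟩
    · subst ha; simp [Nat.xor_assoc]
    · subst ha; rw [Nat.xor_comm b c]; simp [Nat.xor_assoc]
  obtain ⟨i, hi, hij⟩ := Nat.exists_most_significant_bit hd
  have hbits : ∀ j, i < j → a.testBit j = (b ^^^ c).testBit j := by
    intro j hj
    have := hij j hj
    rw [Nat.testBit_xor] at this
    simpa using this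
  rw [Nat.testBit_xor] at hi
  by_cases hA : a.testBit i
  · left
    refine Nat.lt_of_testBit i ?_ hA fun j hj => (hbits j hj).symm
    simpa [hA] using hi
  · have hBC : (b ^^^ c).testBit i = true := by
      simpa [hA] using hi
    rw [Nat.testBit_xor] at hBC
    by_cases hB : b.testBit i
    · right; left
      have hC : c.testBit i = false := by simpa [hB] using hBC
      refine Nat.lt_of_testBit i ?_ hB fun j hj => ?_
      · simp [Nat.testBit_xor, hA, hC]
      · have := hbits j hj
        rw [Nat.testBit_xor] at this ⊢
        rw [this]
        cases c.testBit j <;> simp [Bool.xor_comm]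
    · right; right
      have hC : c.testBit i = true := by simpa [hB] using hBC
      refine Nat.lt_of_testBit i ?_ hC fun j hj => ?_
      · simp [Nat.testBit_xor, hA, hB]
      · have := hbits j hj
        rw [Nat.testBit_xor] at this ⊢
        rw [this]
        cases b.testBit j <;> cases c.testBit j <;> simp
end

section
/- Let a, b be natural numbers and let X = {α ⊕ b : α ∈ ℕ, α < a} ∪ {a ⊕ β : β ∈ ℕ, β < b} (where ⊕ denotes the Nim sum). Then a ⊕ b is the smallest element of ℕ \ X; that is, a ⊕ b ∉ X and every natural number c < a ⊕ b belongs to X. -/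
/-! If `c < a ⊕ b`, the highest bit of `c ⊕ a ⊕ b` is set in `a` or in `b`, hence `c ⊕ b < a` or
`c ⊕ a < b`; and `c` is the Nim sum of that smaller number with `b`, respectively `a`. -/

/-- `a ⊕ b` is the smallest element of `ℕ \ X`, where
`X = {α ⊕ b : α < a} ∪ {a ⊕ β : β < b}`: it is not in `X`, and every `c < a ⊕ b`
belongs to `X`. -/
theorem nim_xor_smallest_not_mem (a b : ℕ) :
    a ^^^ b ∉ ({x | ∃ α : ℕ, α < a ∧ x = α ^^^ b} ∪
      {x | ∃ β : ℕ, β < b ∧ x = a ^^^ β} : Set ℕ) ∧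
    ∀ c : ℕ, c < a ^^^ b →
      c ∈ ({x | ∃ α : ℕ, α < a ∧ x = α ^^^ b} ∪
        {x | ∃ β : ℕ, β < b ∧ x = a ^^^ β} : Set ℕ) := by
  refine ⟨?_, fun c hc => ?_⟩
  · rintro (⟨α, hα, h⟩ | ⟨β, hβ, h⟩)
    · exact hα.ne (Nat.xor_left_inj.mp h).symm
    · exact hβ.ne (Nat.xor_right_inj.mp h).symm
  · rcases Nat.lt_xor_cases hc with h | h
    · exact Or.inl ⟨c ^^^ b, h, (Nat.xor_xor_cancel_right c b).symm⟩
    · exact Or.inr ⟨c ^^^ a, h, by rw [Nat.xor_comm c, Nat.xor_xor_cancel_left]⟩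
end

section
/- Let a, b, c be natural numbers with c ≠ a ⊕ b (where ⊕ denotes the Nim sum), and let j be the largest index at which the binary digit of a differs from the corresponding binary digit of b ⊕ c. If the j-th binary digits of a, b, c are 1, 0, 0 respectively, then a > b ⊕ c, b < a ⊕ c, and c < a ⊕ b (i.e., a is large and b and c are small). -/
/-- Suppose `c ≠ a ⊕ b` and `j` is the largest index at which the binary digits of `a`
and `b ⊕ c` differ. If the `j`-th digits of `a, b, c` are `1, 0, 0` respectively,
then `a` is large and `b`, `c` are small. -/
theorem nim_case_100 (a b c j : ℕ) (h : c ≠ a ^^^ b)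
    (hj : Nat.testBit a j ≠ Nat.testBit (b ^^^ c) j)
    (hmax : ∀ i, i > j → Nat.testBit a i = Nat.testBit (b ^^^ c) i)
    (ha : Nat.testBit a j = true)
    (hb : Nat.testBit b j = false)
    (hc : Nat.testBit c j = false) :
    a > b ^^^ c ∧ b < a ^^^ c ∧ c < a ^^^ b := by
  have hmax' : ∀ i, i > j → Nat.testBit a i = xor (Nat.testBit b i) (Nat.testBit c i) := by
    intro i hi; simpa [Nat.testBit_xor] using hmax i hi
  refine ⟨?_, ?_, ?_⟩
  · exact Nat.lt_of_testBit j (by simp [Nat.testBit_xor, hb, hc]) ha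
      (fun i hi => (hmax i hi).symm)
  · refine Nat.lt_of_testBit j hb (by simp [Nat.testBit_xor, ha, hc]) ?_
    intro i hi
    simp [Nat.testBit_xor, hmax' i hi, Bool.xor_assoc]
  · refine Nat.lt_of_testBit j hc (by simp [Nat.testBit_xor, ha, hb]) ?_
    intro i hi
    simp [Nat.testBit_xor, hmax' i hi]
    cases Nat.testBit b i <;> cases Nat.testBit c i <;> simp
end

section
/- Let a, b, c be natural numbers with c ≠ a ⊕ b (where ⊕ denotes the Nim sum), and let j be the largest index at which the binary digit of a differs from the corresponding binary digit of b ⊕ c. If the j-th binary digits of a, b, c are all 1, then a > b ⊕ c, b > a ⊕ c, and c > a ⊕ b (i.e., all three vertices are large and the triple is tight). -/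
/-- Suppose `c ≠ a ⊕ b` and `j` is the largest index at which the binary digits of `a`
and `b ⊕ c` differ. If the `j`-th digits of `a, b, c` are all 1, then all three
vertices are large (the triple is tight). -/
theorem nim_case_111 (a b c j : ℕ) (h : c ≠ a ^^^ b)
    (hj : Nat.testBit a j ≠ Nat.testBit (b ^^^ c) j)
    (hmax : ∀ i, i > j → Nat.testBit a i = Nat.testBit (b ^^^ c) i)
    (ha : Nat.testBit a j = true)
    (hb : Nat.testBit b j = true)
    (hc : Nat.testBit c j = true) :
    a > b ^^^ c ∧ b > a ^^^ c ∧ c > a ^^^ b := by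
  have hbc : Nat.testBit (b ^^^ c) j = false := by
    simp [Nat.testBit_xor, hb, hc]
  have hhi : ∀ i, j < i → Nat.testBit a i = Bool.xor (Nat.testBit b i) (Nat.testBit c i) := by
    intro i hi
    have := hmax i hi
    simpa [Nat.testBit_xor] using this
  refine ⟨Nat.lt_of_testBit j hbc ha (fun i hi => ((hmax i hi).symm)), ?_, ?_⟩
  · refine Nat.lt_of_testBit j ?_ hb ?_
    · simp [Nat.testBit_xor, ha, hc]
    · intro i hi
      have := hhi i hi
      simp [Nat.testBit_xor, this]
  · refine Nat.lt_of_testBit j ?_ hc ?_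
    · simp [Nat.testBit_xor, ha, hb]
    · intro i hi
      have := hhi i hi
      simp [Nat.testBit_xor, this]
      cases Nat.testBit b i <;> cases Nat.testBit c i <;> simp
end
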